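/- arXiv:0811.3356 — 5 statements merged into one kernel-verified Lean document; each statement's English description precedes it below -/
import Mathlib

section
/- Fix λ ∈ ℂ with λ ≠ 0, an open set U ⊆ ℂ, a smooth function φ : U → ℝ and a smooth function t : U → ℂ. Define P, Q : U → M₂(ℂ) by P = [[−(1/4)∂φ, λ·t·e^{−φ/2}], [e^{φ/2}, (1/4)∂φ]] and Q = [[(1/4)∂̄φ, e^{φ/2}], [−λ⁻¹·t̄·e^{−φ/2}, −(1/4)∂̄φ]]. Then the zero-curvature equation ∂Q − ∂̄P + PQ − QP = 0 holds everywhere on U if and only if t is holomorphic on U (∂̄t = 0 on U) and φ satisfies the cosh-Gordon equation (1/2)∂∂̄φ = e^φ + |t|²·e^{−φ} on U. -/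
open Complex Matrix

/-- Wirtinger derivative ∂f(z) = (1/2)(Df(z)(1) − i·Df(z)(i)). -/
noncomputable def wD (f : ℂ → ℂ) (z : ℂ) : ℂ :=
  (1 / 2) * (fderiv ℝ f z 1 - Complex.I * fderiv ℝ f z Complex.I)

/-- Conjugate Wirtinger derivative ∂̄f(z) = (1/2)(Df(z)(1) + i·Df(z)(i)). -/
noncomputable def wDbar (f : ℂ → ℂ) (z : ℂ) : ℂ :=
  (1 / 2) * (fderiv ℝ f z 1 + Complex.I * fderiv ℝ f z Complex.I)

/-- Entrywise Wirtinger derivative of a matrix-valued function. -/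
noncomputable def mwD (F : ℂ → Matrix (Fin 2) (Fin 2) ℂ) (z : ℂ) : Matrix (Fin 2) (Fin 2) ℂ :=
  Matrix.of fun i j => wD (fun w => F w i j) z

/-- Entrywise conjugate Wirtinger derivative of a matrix-valued function. -/
noncomputable def mwDbar (F : ℂ → Matrix (Fin 2) (Fin 2) ℂ) (z : ℂ) : Matrix (Fin 2) (Fin 2) ℂ :=
  Matrix.of fun i j => wDbar (fun w => F w i j) z

/-- The `dz`-coefficient P(λ) of the cosh-Gordon connection. -/
noncomputable def coshP (lam : ℂ) (φ : ℂ → ℝ) (t : ℂ → ℂ) (z : ℂ) : Matrix (Fin 2) (Fin 2) ℂ :=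
  !![-(1 / 4) * wD (fun w => (φ w : ℂ)) z, lam * t z * (Real.exp (-φ z / 2) : ℝ);
     ((Real.exp (φ z / 2) : ℝ) : ℂ), (1 / 4) * wD (fun w => (φ w : ℂ)) z]

/-- The `dz̄`-coefficient Q(λ) of the cosh-Gordon connection. -/
noncomputable def coshQ (lam : ℂ) (φ : ℂ → ℝ) (t : ℂ → ℂ) (z : ℂ) : Matrix (Fin 2) (Fin 2) ℂ :=
  !![(1 / 4) * wDbar (fun w => (φ w : ℂ)) z, ((Real.exp (φ z / 2) : ℝ) : ℂ);
     -lam⁻¹ * (starRingEnd ℂ) (t z) * (Real.exp (-φ z / 2) : ℝ), -(1 / 4) * wDbar (fun w => (φ w : ℂ)) z]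

section Helpers

variable {f g : ℂ → ℂ} {z : ℂ}

lemma wD_mul (hf : DifferentiableAt ℝ f z) (hg : DifferentiableAt ℝ g z) :
    wD (fun w => f w * g w) z = wD f z * g z + f z * wD g z := by
  unfold wD
  rw [fderiv_fun_mul hf hg]
  simp only [ContinuousLinearMap.add_apply, ContinuousLinearMap.coe_smul', Pi.smul_apply,
    smul_eq_mul]
  ring

lemma wDbar_mul (hf : DifferentiableAt ℝ f z) (hg : DifferentiableAt ℝ g z) :
    wDbar (fun w => f w * g w) z = wDbar f z * g z + f z * wDbar g z := by
  unfold wDbar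
  rw [fderiv_fun_mul hf hg]
  simp only [ContinuousLinearMap.add_apply, ContinuousLinearMap.coe_smul', Pi.smul_apply,
    smul_eq_mul]
  ring

lemma wD_const_mul (hf : DifferentiableAt ℝ f z) (c : ℂ) :
    wD (fun w => c * f w) z = c * wD f z := by
  unfold wD
  rw [fderiv_const_mul hf c]
  simp only [ContinuousLinearMap.coe_smul', Pi.smul_apply, smul_eq_mul]
  ring

lemma wDbar_const_mul (hf : DifferentiableAt ℝ f z) (c : ℂ) :
    wDbar (fun w => c * f w) z = c * wDbar f z := by
  unfold wDbar
  rw [fderiv_const_mul hf c]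
  simp only [ContinuousLinearMap.coe_smul', Pi.smul_apply, smul_eq_mul]
  ring

lemma exp_fderiv (hf : DifferentiableAt ℝ f z) :
    fderiv ℝ (fun w => Complex.exp (f w)) z
      = Complex.exp (f z) • fderiv ℝ f z := by
  have h1 : HasFDerivAt Complex.exp
      (ContinuousLinearMap.smulRight (1 : ℂ →L[ℂ] ℂ) (Complex.exp (f z))) (f z) :=
    (Complex.hasDerivAt_exp (f z)).hasFDerivAt
  have h2 := ((h1.restrictScalars ℝ).comp z hf.hasFDerivAt).fderiv
  rw [show (fun w => Complex.exp (f w)) = Complex.exp ∘ f from rfl, h2]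
  ext v
  simp [smul_eq_mul, mul_comm]

lemma wD_exp (hf : DifferentiableAt ℝ f z) :
    wD (fun w => Complex.exp (f w)) z = Complex.exp (f z) * wD f z := by
  unfold wD
  rw [exp_fderiv hf]
  simp only [ContinuousLinearMap.coe_smul', Pi.smul_apply, smul_eq_mul]
  ring

lemma wDbar_exp (hf : DifferentiableAt ℝ f z) :
    wDbar (fun w => Complex.exp (f w)) z = Complex.exp (f z) * wDbar f z := by
  unfold wDbar
  rw [exp_fderiv hf]
  simp only [ContinuousLinearMap.coe_smul', Pi.smul_apply, smul_eq_mul]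
  ring

lemma conj_fderiv (hf : DifferentiableAt ℝ f z) :
    fderiv ℝ (fun w => (starRingEnd ℂ) (f w)) z
      = (Complex.conjCLE.toContinuousLinearMap).comp (fderiv ℝ f z) := by
  have h2 := ((Complex.conjCLE.toContinuousLinearMap.hasFDerivAt).comp z hf.hasFDerivAt).fderiv
  rw [show (fun w => (starRingEnd ℂ) (f w)) = (Complex.conjCLE.toContinuousLinearMap) ∘ f from rfl,
    h2]

lemma wD_conj (hf : DifferentiableAt ℝ f z) :
    wD (fun w => (starRingEnd ℂ) (f w)) z = (starRingEnd ℂ) (wDbar f z) := by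
  unfold wD wDbar
  rw [conj_fderiv hf]
  simp only [ContinuousLinearMap.coe_comp', Function.comp_apply,
    ContinuousLinearEquiv.coe_coe, Complex.conjCLE_apply, _root_.map_mul, map_add,
    Complex.conj_I, map_div₀, _root_.map_one, map_ofNat]
  ring

lemma snd_deriv_pack {U : Set ℂ} (hU : IsOpen U) (hf : ContDiffOn ℝ (⊤ : ℕ∞) f U)
    (hz : z ∈ U) :
    DifferentiableAt ℝ (wD f) z ∧ DifferentiableAt ℝ (wDbar f) z ∧
      wD (wDbar f) z = wDbar (wD f) z := by
  set D := fderiv ℝ f with hDdef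
  have hD : ContDiffOn ℝ 1 D U := (hf.of_le (by exact WithTop.coe_le_coe.mpr le_top)).fderiv_of_isOpen hU le_rfl
  have hDdiff : DifferentiableAt ℝ D z :=
    (hD.contDiffAt (hU.mem_nhds hz)).differentiableAt one_ne_zero
  have hv : ∀ v : ℂ, DifferentiableAt ℝ (fun w => D w v) z := fun v =>
    hDdiff.clm_apply (differentiableAt_const v)
  have hev : ∀ v : ℂ, fderiv ℝ (fun w => D w v) z = (fderiv ℝ D z).flip v := by
    intro v
    have := (hDdiff.hasFDerivAt.clm_apply (hasFDerivAt_const v z)).fderiv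
    rw [this]
    ext u
    simp
  have hfd : ∀ᶠ y in nhds z, HasFDerivAt f (D y) y := by
    filter_upwards [hU.mem_nhds hz] with y hy
    exact (((hf.contDiffAt (hU.mem_nhds hy)).differentiableAt (by simp))).hasFDerivAt
  have hsymm : ∀ v w : ℂ, fderiv ℝ D z v w = fderiv ℝ D z w v := fun v w =>
    second_derivative_symmetric_of_eventually hfd hDdiff.hasFDerivAt v w
  have eqD : wD f = fun w => (1/2 : ℂ) * (D w 1 - Complex.I * D w Complex.I) := rfl
  have eqDbar : wDbar f = fun w => (1/2 : ℂ) * (D w 1 + Complex.I * D w Complex.I) := rfl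
  have diffD : DifferentiableAt ℝ (wD f) z := by
    rw [eqD]; exact (((hv 1).sub ((hv Complex.I).const_mul Complex.I)).const_mul _)
  have diffDbar : DifferentiableAt ℝ (wDbar f) z := by
    rw [eqDbar]; exact (((hv 1).add ((hv Complex.I).const_mul Complex.I)).const_mul _)
  refine ⟨diffD, diffDbar, ?_⟩
  have fdD : ∀ u : ℂ, fderiv ℝ (wD f) z u
      = (1/2 : ℂ) * (fderiv ℝ D z u 1 - Complex.I * fderiv ℝ D z u Complex.I) := by
    intro u
    rw [eqD, fderiv_const_mul (a := fun w => D w 1 - Complex.I * D w Complex.I)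
        ((hv 1).sub ((hv Complex.I).const_mul Complex.I)),
      fderiv_fun_sub (hv 1) ((hv Complex.I).const_mul Complex.I),
      fderiv_const_mul (hv Complex.I), hev, hev]
    simp
  have fdDbar : ∀ u : ℂ, fderiv ℝ (wDbar f) z u
      = (1/2 : ℂ) * (fderiv ℝ D z u 1 + Complex.I * fderiv ℝ D z u Complex.I) := by
    intro u
    rw [eqDbar, fderiv_const_mul (a := fun w => D w 1 + Complex.I * D w Complex.I)
        ((hv 1).add ((hv Complex.I).const_mul Complex.I)),
      fderiv_fun_add (hv 1) ((hv Complex.I).const_mul Complex.I),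
      fderiv_const_mul (hv Complex.I), hev, hev]
    simp
    ring
  show (1/2 : ℂ) * (fderiv ℝ (wDbar f) z 1 - Complex.I * fderiv ℝ (wDbar f) z Complex.I)
      = (1/2 : ℂ) * (fderiv ℝ (wD f) z 1 + Complex.I * fderiv ℝ (wD f) z Complex.I)
  rw [fdD, fdD, fdDbar, fdDbar, hsymm 1 Complex.I]
  ring

end Helpers

/-- The zero-curvature equation for the cosh-Gordon connection at a fixed λ ≠ 0 holds on U
iff t is holomorphic on U and φ satisfies the cosh-Gordon equation
(1/2)∂∂̄φ = e^φ + |t|²e^{−φ} on U. -/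
theorem coshGordon_zero_curvature_iff
    (lam : ℂ) (hlam : lam ≠ 0) (U : Set ℂ) (hU : IsOpen U)
    (φ : ℂ → ℝ) (t : ℂ → ℂ)
    (hφ : ContDiffOn ℝ (⊤ : ℕ∞) φ U) (ht : ContDiffOn ℝ (⊤ : ℕ∞) t U) :
    (∀ z ∈ U,
        mwD (coshQ lam φ t) z - mwDbar (coshP lam φ t) z
          + coshP lam φ t z * coshQ lam φ t z - coshQ lam φ t z * coshP lam φ t z = 0) ↔
    ((∀ z ∈ U, wDbar t z = 0) ∧
      (∀ z ∈ U,
        (1 / 2) * wD (fun w => wDbar (fun v => (φ v : ℂ)) w) z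
          = ((Real.exp (φ z) : ℝ) : ℂ)
            + ((‖t z‖ : ℝ) : ℂ) ^ 2 * ((Real.exp (-φ z) : ℝ) : ℂ))) := by
  have main : ∀ z ∈ U,
      (mwD (coshQ lam φ t) z - mwDbar (coshP lam φ t) z
          + coshP lam φ t z * coshQ lam φ t z - coshQ lam φ t z * coshP lam φ t z = 0) ↔
      (wDbar t z = 0 ∧
        (1 / 2) * wD (fun w => wDbar (fun v => (φ v : ℂ)) w) z
          = ((Real.exp (φ z) : ℝ) : ℂ)
            + ((‖t z‖ : ℝ) : ℂ) ^ 2 * ((Real.exp (-φ z) : ℝ) : ℂ)) := by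
    intro z hz
    set cφ : ℂ → ℂ := fun w => (φ w : ℂ) with hcφdef
    have hcφU : ContDiffOn ℝ (⊤ : ℕ∞) cφ U := Complex.ofRealCLM.contDiff.comp_contDiffOn hφ
    have hcφ : DifferentiableAt ℝ cφ z :=
      ((hcφU.contDiffAt (hU.mem_nhds hz)).differentiableAt (by simp))
    have htd : DifferentiableAt ℝ t z :=
      ((ht.contDiffAt (hU.mem_nhds hz)).differentiableAt (by simp))
    have hconjt : DifferentiableAt ℝ (fun w => (starRingEnd ℂ) (t w)) z :=
      (Complex.conjCLE.toContinuousLinearMap.differentiableAt).comp z htd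
    have hEp : DifferentiableAt ℝ (fun w => Complex.exp ((1/2 : ℂ) * cφ w)) z :=
      ((Complex.differentiable_exp (𝕜 := ℝ) ((1/2:ℂ) * cφ z)).comp z (hcφ.const_mul _))
    have hEm : DifferentiableAt ℝ (fun w => Complex.exp ((-(1/2) : ℂ) * cφ w)) z :=
      ((Complex.differentiable_exp (𝕜 := ℝ) ((-(1/2):ℂ) * cφ z)).comp z (hcφ.const_mul _))
    have castEp : ∀ w : ℂ, ((Real.exp (φ w / 2) : ℝ) : ℂ) = Complex.exp ((1/2 : ℂ) * cφ w) := by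
      intro w; rw [Complex.ofReal_exp]; push_cast; ring_nf; rfl
    have castEm : ∀ w : ℂ,
        ((Real.exp (-φ w / 2) : ℝ) : ℂ) = Complex.exp ((-(1/2) : ℂ) * cφ w) := by
      intro w; rw [Complex.ofReal_exp]; push_cast; ring_nf; rfl
    obtain ⟨hdwD, hdwDbar, hsym⟩ := snd_deriv_pack hU hcφU hz
    set a : ℂ := wD cφ z with ha
    set b : ℂ := wDbar cφ z with hb
    set s : ℂ := wDbar t z with hs
    set Ep : ℂ := Complex.exp ((1/2 : ℂ) * cφ z) with hEpdef
    set Em : ℂ := Complex.exp ((-(1/2) : ℂ) * cφ z) with hEmdef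
    set X2 : ℂ := wD (wDbar cφ) z with hX2
    -- derivative values of the eight entry functions
    have d1 : wD (fun w => (1/4 : ℂ) * wDbar (fun v => (φ v : ℂ)) w) z = (1/4 : ℂ) * X2 := by
      rw [wD_const_mul hdwDbar]
    have d2 : wD (fun w => ((Real.exp (φ w / 2) : ℝ) : ℂ)) z = Ep * ((1/2 : ℂ) * a) := by
      rw [funext castEp, wD_exp (hcφ.const_mul _), wD_const_mul hcφ]
    have d3 : wD (fun w => -lam⁻¹ * (starRingEnd ℂ) (t w) * ((Real.exp (-φ w / 2) : ℝ) : ℂ)) z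
        = (-lam⁻¹ * (starRingEnd ℂ) s) * Em
          + (-lam⁻¹ * (starRingEnd ℂ) (t z)) * (Em * ((-(1/2) : ℂ) * a)) := by
      have : (fun w => -lam⁻¹ * (starRingEnd ℂ) (t w) * ((Real.exp (-φ w / 2) : ℝ) : ℂ))
          = fun w => (-lam⁻¹ * (starRingEnd ℂ) (t w)) * Complex.exp ((-(1/2) : ℂ) * cφ w) := by
        funext w; rw [castEm]
      rw [this, wD_mul (hconjt.const_mul _) hEm, wD_const_mul hconjt, wD_conj htd,
        wD_exp (hcφ.const_mul _), wD_const_mul hcφ]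
    have d4 : wD (fun w => -(1/4 : ℂ) * wDbar (fun v => (φ v : ℂ)) w) z = -(1/4 : ℂ) * X2 := by
      rw [wD_const_mul hdwDbar]
    have d5 : wDbar (fun w => -(1/4 : ℂ) * wD (fun v => (φ v : ℂ)) w) z = -(1/4 : ℂ) * X2 := by
      rw [wDbar_const_mul hdwD, ← hsym]
    have d6 : wDbar (fun w => lam * t w * ((Real.exp (-φ w / 2) : ℝ) : ℂ)) z
        = (lam * s) * Em + (lam * t z) * (Em * ((-(1/2) : ℂ) * b)) := by
      have : (fun w => lam * t w * ((Real.exp (-φ w / 2) : ℝ) : ℂ))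
          = fun w => (lam * t w) * Complex.exp ((-(1/2) : ℂ) * cφ w) := by
        funext w; rw [castEm]
      rw [this, wDbar_mul (htd.const_mul _) hEm, wDbar_const_mul htd,
        wDbar_exp (hcφ.const_mul _), wDbar_const_mul hcφ]
    have d7 : wDbar (fun w => ((Real.exp (φ w / 2) : ℝ) : ℂ)) z = Ep * ((1/2 : ℂ) * b) := by
      rw [funext castEp, wDbar_exp (hcφ.const_mul _), wDbar_const_mul hcφ]
    have d8 : wDbar (fun w => (1/4 : ℂ) * wD (fun v => (φ v : ℂ)) w) z = (1/4 : ℂ) * X2 := by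
      rw [wDbar_const_mul hdwD, ← hsym]
    -- the four matrices as explicit 2×2 literals
    have hmQ : mwD (coshQ lam φ t) z
        = !![(1/4 : ℂ) * X2, Ep * ((1/2 : ℂ) * a);
             (-lam⁻¹ * (starRingEnd ℂ) s) * Em
               + (-lam⁻¹ * (starRingEnd ℂ) (t z)) * (Em * ((-(1/2) : ℂ) * a)),
             -(1/4 : ℂ) * X2] := by
      ext i j
      fin_cases i <;> fin_cases j <;>
        simp only [mwD, coshQ, Matrix.of_apply, Fin.zero_eta, Fin.mk_one, Matrix.cons_val',
          Matrix.cons_val_zero, Matrix.cons_val_one, Matrix.head_cons, Matrix.head_fin_const,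
          Matrix.empty_val', Matrix.cons_val_fin_one, Fin.isValue]
      · exact d1
      · exact d2
      · exact d3
      · exact d4
    have hmP : mwDbar (coshP lam φ t) z
        = !![-(1/4 : ℂ) * X2, (lam * s) * Em + (lam * t z) * (Em * ((-(1/2) : ℂ) * b));
             Ep * ((1/2 : ℂ) * b), (1/4 : ℂ) * X2] := by
      ext i j
      fin_cases i <;> fin_cases j <;>
        simp only [mwDbar, coshP, Matrix.of_apply, Fin.zero_eta, Fin.mk_one, Matrix.cons_val',
          Matrix.cons_val_zero, Matrix.cons_val_one, Matrix.head_cons, Matrix.head_fin_const,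
          Matrix.empty_val', Matrix.cons_val_fin_one, Fin.isValue]
      · exact d5
      · exact d6
      · exact d7
      · exact d8
    have hPz : coshP lam φ t z = !![-(1/4 : ℂ) * a, lam * t z * Em; Ep, (1/4 : ℂ) * a] := by
      rw [coshP, castEp, castEm]
    have hQz : coshQ lam φ t z
        = !![(1/4 : ℂ) * b, Ep; -lam⁻¹ * (starRingEnd ℂ) (t z) * Em, -(1/4 : ℂ) * b] := by
      rw [coshQ, castEp, castEm]
    have hlaminv : lam * lam⁻¹ = 1 := mul_inv_cancel₀ hlam
    have hmat : mwD (coshQ lam φ t) z - mwDbar (coshP lam φ t) z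
          + coshP lam φ t z * coshQ lam φ t z - coshQ lam φ t z * coshP lam φ t z
        = !![(1/2 : ℂ) * X2 - Ep * Ep - (t z * (starRingEnd ℂ) (t z)) * (Em * Em),
             -lam * Em * s;
             -lam⁻¹ * Em * (starRingEnd ℂ) s,
             -((1/2 : ℂ) * X2 - Ep * Ep - (t z * (starRingEnd ℂ) (t z)) * (Em * Em))] := by
      rw [hmQ, hmP, hPz, hQz, Matrix.mul_fin_two, Matrix.mul_fin_two]
      ext i j
      fin_cases i <;> fin_cases j <;>
        simp only [Matrix.sub_apply, Matrix.add_apply, Matrix.of_apply,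
          Fin.zero_eta, Fin.mk_one, Matrix.cons_val', Matrix.cons_val_zero, Matrix.cons_val_one,
          Matrix.head_cons, Matrix.head_fin_const, Matrix.empty_val', Matrix.cons_val_fin_one,
          Fin.isValue]
      · linear_combination (-(t z * (starRingEnd ℂ) (t z) * Em * Em)) * hlaminv
      · ring
      · ring
      · linear_combination (t z * (starRingEnd ℂ) (t z) * Em * Em) * hlaminv
    have hEp2 : Ep * Ep = ((Real.exp (φ z) : ℝ) : ℂ) := by
      rw [hEpdef, ← Complex.exp_add, Complex.ofReal_exp]
      norm_num
      ring_nf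
      rfl
    have hEm2 : Em * Em = ((Real.exp (-φ z) : ℝ) : ℂ) := by
      rw [hEmdef, ← Complex.exp_add, Complex.ofReal_exp]
      push_cast
      ring_nf
      rfl
    have habs : t z * (starRingEnd ℂ) (t z) = ((‖t z‖ : ℝ) : ℂ) ^ 2 := by
      rw [Complex.mul_conj]
      norm_cast
      exact (Complex.sq_norm _).symm
    rw [hmat]
    constructor
    · intro h
      have h01 : -lam * Em * s = 0 := by
        have := congrFun (congrFun h 0) 1
        simpa using this
      have hs0 : s = 0 := by
        simpa [hlam, Complex.exp_ne_zero, hEmdef] using h01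
      have h00 : (1/2 : ℂ) * X2 - Ep * Ep - (t z * (starRingEnd ℂ) (t z)) * (Em * Em) = 0 := by
        have := congrFun (congrFun h 0) 0
        simpa using this
      refine ⟨hs0, ?_⟩
      linear_combination h00 + hEp2 + (Em * Em) * habs
        + (((‖t z‖ : ℝ) : ℂ) ^ 2) * hEm2
    · rintro ⟨hs0, heq⟩
      ext i j
      fin_cases i <;> fin_cases j <;>
        simp only [Matrix.of_apply, Matrix.cons_val', Matrix.cons_val_zero, Matrix.cons_val_one, Matrix.head_cons,
          Matrix.head_fin_const, Matrix.empty_val', Matrix.cons_val_fin_one, Fin.zero_eta,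
          Fin.mk_one, Fin.isValue, Matrix.zero_apply]
      · linear_combination heq - hEp2 - (Em * Em) * habs
          - (((‖t z‖ : ℝ) : ℂ) ^ 2) * hEm2
      · rw [hs0]; ring
      · rw [hs0]; simp
      · linear_combination -heq + hEp2 + (Em * Em) * habs
          + (((‖t z‖ : ℝ) : ℂ) ^ 2) * hEm2
  constructor
  · intro h
    exact ⟨fun z hz => ((main z hz).1 (h z hz)).1, fun z hz => ((main z hz).1 (h z hz)).2⟩
  · rintro ⟨h1, h2⟩ z hz
    exact (main z hz).2 ⟨h1 z hz, h2 z hz⟩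
end

section
/- Let U ⊆ ℂ be open, φ : U → ℝ and t : U → ℂ smooth, and for λ ∈ ℂ, λ ≠ 0, define P(λ) = [[−(1/4)∂φ, λ·t·e^{−φ/2}], [e^{φ/2}, (1/4)∂φ]] and Q(λ) = [[(1/4)∂̄φ, e^{φ/2}], [−λ⁻¹·t̄·e^{−φ/2}, −(1/4)∂̄φ]], and for a tangent vector w ∈ ℂ set 𝒜(λ)(w) = P(λ)·w + Q(λ)·w̄ ∈ M₂(ℂ). Then the family satisfies the reality condition 𝒜(−1/λ̄)(w)* = −𝒜(λ)(w) at every point of U, for every λ ≠ 0 and every w ∈ ℂ, where X* = C·Xᴴ·C denotes pseudo-Hermitian conjugation with C = diag(1, −1) and Xᴴ the conjugate transpose. -/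
open Complex Matrix

/-- Value of the cosh-Gordon connection 𝒜(λ) on a tangent vector w: P(λ)·w + Q(λ)·w̄. -/
noncomputable def coshA (lam : ℂ) (φ : ℂ → ℝ) (t : ℂ → ℂ) (z w : ℂ) : Matrix (Fin 2) (Fin 2) ℂ :=
  w • coshP lam φ t z + (starRingEnd ℂ w) • coshQ lam φ t z

lemma conj_fderiv_real (φ : ℂ → ℝ) (z v : ℂ) :
    starRingEnd ℂ (fderiv ℝ (fun w => (φ w : ℂ)) z v)
      = fderiv ℝ (fun w => (φ w : ℂ)) z v := by
  have h : (⇑Complex.conjCLE ∘ fun w => ((φ w : ℝ) : ℂ)) = fun w => ((φ w : ℝ) : ℂ) := by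
    ext w; simp
  calc starRingEnd ℂ (fderiv ℝ (fun w => (φ w : ℂ)) z v)
      = ((Complex.conjCLE : ℂ →L[ℝ] ℂ).comp (fderiv ℝ (fun w => (φ w : ℂ)) z)) v := rfl
    _ = fderiv ℝ (⇑Complex.conjCLE ∘ fun w => (φ w : ℂ)) z v := by
        rw [Complex.conjCLE.comp_fderiv]
    _ = _ := by rw [h]

lemma conj_wD_real (φ : ℂ → ℝ) (z : ℂ) :
    starRingEnd ℂ (wD (fun w => (φ w : ℂ)) z) = wDbar (fun w => (φ w : ℂ)) z := by
  simp only [wD, wDbar, _root_.map_mul, _root_.map_sub, _root_.map_one, map_ofNat, map_div₀,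
    Complex.conj_I, conj_fderiv_real]
  ring

/-- The reality condition 𝒜(−1/λ̄)(w)* = −𝒜(λ)(w), where X* = C·Xᴴ·C with C = diag(1,−1). -/
theorem coshGordon_reality
    (U : Set ℂ) (hU : IsOpen U) (φ : ℂ → ℝ) (t : ℂ → ℂ)
    (hφ : ContDiffOn ℝ (⊤ : ℕ∞) φ U) (ht : ContDiffOn ℝ (⊤ : ℕ∞) t U) :
    ∀ z ∈ U, ∀ lam : ℂ, lam ≠ 0 → ∀ w : ℂ,
      !![(1 : ℂ), 0; 0, -1] * (coshA (-(starRingEnd ℂ lam)⁻¹) φ t z w)ᴴ * !![(1 : ℂ), 0; 0, -1]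
        = -(coshA lam φ t z w) := by
  intro z hz lam hlam w
  have hab := conj_wD_real φ z
  have hba : starRingEnd ℂ (wDbar (fun w => (φ w : ℂ)) z) = wD (fun w => (φ w : ℂ)) z := by
    rw [← hab, Complex.conj_conj]
  have hlam' : starRingEnd ℂ lam ≠ 0 := by simpa using hlam
  ext i j
  fin_cases i <;> fin_cases j <;>
    · simp only [coshA, coshP, coshQ, Matrix.add_apply, Matrix.smul_apply, Matrix.neg_apply,
        Matrix.mul_apply, Matrix.conjTranspose_apply, Fin.sum_univ_two, Matrix.cons_val',
        Matrix.cons_val_zero, Matrix.cons_val_one, Matrix.head_cons, Matrix.head_fin_const,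
        Matrix.empty_val', Matrix.cons_val_fin_one, smul_eq_mul,
        _root_.map_mul, _root_.map_add, _root_.map_neg, map_inv₀, Complex.conj_conj,
        Complex.conj_ofReal, map_div₀, map_ofNat, _root_.map_one, hab, hba,
        Matrix.of_apply, Fin.zero_eta, Fin.mk_one, Matrix.cons_val, Complex.star_def]
      field_simp
      try ring_nf
end

section
/- Let A ∈ M₂(ℂ), let ψ, θ, l, s ∈ ℝ, and set h = diag(e^{iψ}, e^{−iψ}), D = iθ·diag(1, −1), Λ = diag(e^l, e^{−l}), and H_s = diag(s, −s). Then det(Λ⁻¹·(D + h⁻¹Ah)·Λ + H_s + (D + h⁻¹Ah)ᴴ) = det(Λ⁻¹·A·Λ + H_s + Aᴴ), where ᴴ denotes conjugate transpose. (That is, the metric expression G(A) = (1/4)det(Λ⁻¹AΛ + Λ⁻¹dΛ + A⁺) is unchanged under the gauge transformation A ↦ h⁻¹dh + h⁻¹Ah by a diagonal unitary matrix h, where D is the value of h⁻¹dh and H_s the value of Λ⁻¹dΛ on a tangent vector.) -/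
open Matrix Complex

/-- The metric expression det(Λ⁻¹AΛ + Λ⁻¹dΛ + A⁺) is unchanged under a gauge transformation
A ↦ h⁻¹dh + h⁻¹Ah by a diagonal unitary matrix h, where D = iθ·diag(1,−1) is the value of
h⁻¹dh and H_s = diag(s,−s) the value of Λ⁻¹dΛ on a tangent vector. -/
theorem det_metric_gauge_invariant
    (A : Matrix (Fin 2) (Fin 2) ℂ) (ψ θ l s : ℝ) :
    letI h : Matrix (Fin 2) (Fin 2) ℂ :=
      !![Complex.exp (Complex.I * ψ), 0; 0, Complex.exp (-(Complex.I * ψ))]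
    letI D : Matrix (Fin 2) (Fin 2) ℂ := (Complex.I * θ) • !![(1 : ℂ), 0; 0, -1]
    letI Λ : Matrix (Fin 2) (Fin 2) ℂ :=
      !![((Real.exp l : ℝ) : ℂ), 0; 0, ((Real.exp (-l) : ℝ) : ℂ)]
    letI Hs : Matrix (Fin 2) (Fin 2) ℂ := !![((s : ℝ) : ℂ), 0; 0, -((s : ℝ) : ℂ)]
    (Λ⁻¹ * (D + h⁻¹ * A * h) * Λ + Hs + (D + h⁻¹ * A * h)ᴴ).det
      = (Λ⁻¹ * A * Λ + Hs + Aᴴ).det := by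
  have h1 : Complex.exp (-(Complex.I * ψ)) = (Complex.exp (Complex.I * ψ))⁻¹ :=
    Complex.exp_neg _
  have h2 : ((Real.exp (-l) : ℝ) : ℂ) = ((Real.exp l : ℝ) : ℂ)⁻¹ := by
    rw [Real.exp_neg, Complex.ofReal_inv]
  have h3 : star (Complex.exp (Complex.I * ψ)) = (Complex.exp (Complex.I * ψ))⁻¹ := by
    rw [Complex.star_def, ← Complex.exp_conj, _root_.map_mul, Complex.conj_I, Complex.conj_ofReal,
      neg_mul, Complex.exp_neg]
  have he : Complex.exp (Complex.I * ψ) ≠ 0 := Complex.exp_ne_zero _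
  have hl : ((Real.exp l : ℝ) : ℂ) ≠ 0 := by
    exact_mod_cast Complex.ofReal_ne_zero.mpr (Real.exp_ne_zero l)
  simp only [h1, h2, Matrix.inv_def, Matrix.adjugate_fin_two, Matrix.det_fin_two,
    Matrix.add_apply, Matrix.mul_apply, Matrix.smul_apply, Matrix.conjTranspose_apply,
    Fin.sum_univ_two, Matrix.of_apply, Matrix.cons_val', Matrix.cons_val_zero,
    Matrix.cons_val_one, Matrix.head_cons, Matrix.head_fin_const, Matrix.empty_val',
    Matrix.cons_val_fin_one, smul_eq_mul, Ring.inverse_eq_inv']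
  simp only [star_add, star_mul', star_inv₀, star_neg, h3, Complex.star_def,
    _root_.map_mul, Complex.conj_I, Complex.conj_ofReal, inv_inv,
    mul_zero, zero_mul, add_zero, zero_add, mul_one, mul_neg, neg_mul, neg_neg,
    sub_zero, mul_inv_cancel₀ he, mul_inv_cancel₀ hl, inv_one, one_mul, _root_.map_one, _root_.map_zero, neg_zero]
  set a := Complex.exp (Complex.I * ψ) with ha
  set b := ((Real.exp l : ℝ) : ℂ) with hb
  clear_value a b
  clear h1 h2 h3 ha hb
  have q1 : a * a⁻¹ = 1 := mul_inv_cancel₀ he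
  have q2 : b * b⁻¹ = 1 := mul_inv_cancel₀ hl
  have q3 : a ^ 2 * a⁻¹ ^ 2 = 1 := by rw [← mul_pow, q1, one_pow]
  have q4 : b ^ 2 * b⁻¹ ^ 2 = 1 := by rw [← mul_pow, q2, one_pow]
  ring_nf
  simp only [q1, q2, q3, q4, one_mul]
  ring_nf
  simp only [q1, q2, q3, q4, one_mul, mul_comm (a⁻¹ ^ 2) (a ^ 2), mul_comm (b⁻¹ ^ 2) (b ^ 2)]
  ring
end

section
/- Let t, w ∈ ℂ and φ, l, s ∈ ℝ, and suppose e^φ > |t| (the pointwise cosh-Gordon nondegeneracy condition ρ > |t|²ρ⁻¹ with ρ = e^φ). If (w, s) ≠ (0, 0), then s² + 4·e^φ·|w|²·cosh²(l) + 4·|t|²·e^{−φ}·|w|²·sinh²(l) − 8·Re(t·w²)·cosh(l)·sinh(l) > 0. In particular, the quadratic form of the 3-dimensional metric induced by a cosh-Gordon metric is positive definite for every l ∈ ℝ. -/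
open Complex ComplexConjugate

/-!
Completing the square: with `ρ = e^φ`, the quadratic form equals
`s² + 4ρ⁻¹ ‖ρ cosh l · w̄ - sinh l · t w‖²`. The vector inside the norm vanishes only for
`w = 0`, because `|sinh l| ‖t‖ < ρ cosh l`.
-/

theorem Complex.sq_norm_ofReal_mul_conj_sub (a b : ℝ) (t w : ℂ) :
    ‖a * conj w - b * (t * w)‖ ^ 2
      = a ^ 2 * ‖w‖ ^ 2 + b ^ 2 * ‖t‖ ^ 2 * ‖w‖ ^ 2 - 2 * a * b * (t * w ^ 2).re := by
  simp only [Complex.sq_norm, normSq_sub, map_mul, normSq_ofReal, normSq_conj, conj_ofReal]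
  simp only [mul_re, mul_im, ofReal_re, ofReal_im, conj_re, conj_im, sq]
  ring

theorem Complex.ofReal_mul_conj_sub_ne_zero {a b : ℝ} {t w : ℂ} (h : |b| * ‖t‖ < a)
    (hw : w ≠ 0) : (a : ℂ) * conj w - b * (t * w) ≠ 0 := by
  rw [← norm_pos_iff]
  have hw' : 0 < ‖w‖ := norm_pos_iff.mpr hw
  calc 0 < (a - |b| * ‖t‖) * ‖w‖ := mul_pos (sub_pos.mpr h) hw'
    _ = ‖(a : ℂ) * conj w‖ - ‖(b : ℂ) * (t * w)‖ := by
        have ha : 0 ≤ a := (mul_nonneg (abs_nonneg b) (norm_nonneg t)).trans h.le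
        simp only [norm_mul, norm_real, Real.norm_eq_abs, Complex.norm_conj, abs_of_nonneg ha]
        ring
    _ ≤ _ := norm_sub_norm_le _ _

theorem Real.abs_sinh_lt_cosh (x : ℝ) : |sinh x| < cosh x :=
  abs_lt_of_sq_lt_sq (by linarith [cosh_sq_sub_sinh_sq x]) (cosh_pos x).le

theorem coshGordon_form_eq_sq_add_sq_norm (t w : ℂ) (φ l s : ℝ) :
    s ^ 2 + 4 * Real.exp φ * ‖w‖ ^ 2 * Real.cosh l ^ 2
        + 4 * ‖t‖ ^ 2 * Real.exp (-φ) * ‖w‖ ^ 2 * Real.sinh l ^ 2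
        - 8 * (t * w ^ 2).re * Real.cosh l * Real.sinh l
      = s ^ 2 + 4 * Real.exp (-φ)
          * ‖(Real.exp φ * Real.cosh l : ℝ) * conj w - Real.sinh l * (t * w)‖ ^ 2 := by
  have hexp : Real.exp (-φ) * Real.exp φ = 1 := by rw [← Real.exp_add]; simp
  rw [Complex.sq_norm_ofReal_mul_conj_sub]
  linear_combination (-4 * Real.exp φ * ‖w‖ ^ 2 * Real.cosh l ^ 2
    + 8 * (t * w ^ 2).re * Real.cosh l * Real.sinh l) * hexp

/-- Under the cosh-Gordon nondegeneracy condition e^φ > |t|, the quadratic form of the induced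
3-dimensional metric is positive definite: for (w, s) ≠ (0, 0) and any height l,
s² + 4e^φ|w|²cosh²l + 4|t|²e^{−φ}|w|²sinh²l − 8Re(tw²)cosh l sinh l > 0. -/
theorem coshGordon_metric_posdef
    (t w : ℂ) (φ l s : ℝ)
    (hnd : ‖t‖ < Real.exp φ)
    (hws : (w, s) ≠ (0, 0)) :
    0 < s ^ 2 + 4 * Real.exp φ * ‖w‖ ^ 2 * Real.cosh l ^ 2
        + 4 * ‖t‖ ^ 2 * Real.exp (-φ) * ‖w‖ ^ 2 * Real.sinh l ^ 2
        - 8 * (t * w ^ 2).re * Real.cosh l * Real.sinh l := by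
  rw [coshGordon_form_eq_sq_add_sq_norm]
  rcases eq_or_ne w 0 with rfl | hw
  · have hs : s ≠ 0 := fun hs => hws (by rw [hs])
    positivity
  · have hlt : |Real.sinh l| * ‖t‖ < Real.exp φ * Real.cosh l := by
      calc |Real.sinh l| * ‖t‖ ≤ Real.cosh l * ‖t‖ :=
            mul_le_mul_of_nonneg_right (Real.abs_sinh_lt_cosh l).le (norm_nonneg t)
        _ < Real.cosh l * Real.exp φ := mul_lt_mul_of_pos_left hnd (Real.cosh_pos l)
        _ = Real.exp φ * Real.cosh l := mul_comm _ _
    have hv := Complex.ofReal_mul_conj_sub_ne_zero hlt hw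
    positivity
end

section
/- There do not exist a C² function φ : ℝ² → ℝ that is ℤ²-periodic (φ(x + m, y + n) = φ(x, y) for all integers m, n) and a function t : ℝ² → ℂ such that Δφ = 4·(e^φ + |t|²·e^{−φ}) holds on ℝ², where Δφ = ∂²φ/∂x² + ∂²φ/∂y². In particular the cosh-Gordon equation (1/2)∂∂̄φ = e^φ + |t|²·e^{−φ} has no doubly periodic solutions. -/
/-!
A ℤ²-periodic continuous function attains a global maximum, since all its values are taken on
the compact square `[0,1]²`. At a maximum of `φ` every second directional derivative is
nonpositive, so `Δφ ≤ 0` there, while the right-hand side `4(e^φ + |t|²e^{−φ})` is positive.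
-/

/-- Laplacian Δf = ∂²f/∂x² + ∂²f/∂y² of a function on ℝ², via the real Fréchet derivative. -/
noncomputable def lap2 (f : ℝ × ℝ → ℝ) (p : ℝ × ℝ) : ℝ :=
  fderiv ℝ (fun q => fderiv ℝ f q (1, 0)) p (1, 0)
    + fderiv ℝ (fun q => fderiv ℝ f q (0, 1)) p (0, 1)

open Filter Topology

theorem exists_forall_le_of_intPeriodic {α : Type*} [LinearOrder α] [TopologicalSpace α]
    [ClosedIciTopology α] {f : ℝ × ℝ → α} (hf : Continuous f)
    (hper : ∀ (x y : ℝ) (m n : ℤ), f (x + m, y + n) = f (x, y)) :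
    ∃ p, ∀ q, f q ≤ f p := by
  obtain ⟨p, -, hp⟩ := (isCompact_Icc (a := ((0 : ℝ), (0 : ℝ))) (b := (1, 1))).exists_isMaxOn
    (Set.nonempty_Icc.2 (by norm_num [Prod.le_def])) hf.continuousOn
  refine ⟨p, fun ⟨x, y⟩ => ?_⟩
  have hfract : f (x, y) = f (Int.fract x, Int.fract y) := by
    simpa only [Int.fract_add_floor] using hper (Int.fract x) (Int.fract y) ⌊x⌋ ⌊y⌋
  rw [hfract]
  exact hp ⟨⟨Int.fract_nonneg x, Int.fract_nonneg y⟩,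
    ⟨(Int.fract_lt_one x).le, (Int.fract_lt_one y).le⟩⟩

/-- If the second derivative were positive, the second-derivative test would make `x₀` also a
local minimum, so `f` would be locally constant and its second derivative would vanish. -/
theorem IsLocalMax.deriv_deriv_nonpos {f : ℝ → ℝ} {x₀ : ℝ} (h : IsLocalMax f x₀)
    (hc : ContinuousAt f x₀) : deriv (deriv f) x₀ ≤ 0 := by
  by_contra! hpos
  have hmin : IsLocalMin f x₀ := isLocalMin_of_deriv_deriv_pos hpos h.deriv_eq_zero hc
  have hconst : f =ᶠ[𝓝 x₀] fun _ => f x₀ :=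
    (hmin.and h).mono fun _ hx => le_antisymm hx.2 hx.1
  rw [hconst.deriv.deriv_eq] at hpos
  simp at hpos

section LineRestriction

variable {E : Type*} [NormedAddCommGroup E] [NormedSpace ℝ E]

theorem deriv_deriv_comp_add_smul {φ : E → ℝ} (p₀ v : E) (hφ : Differentiable ℝ φ)
    (hφ' : DifferentiableAt ℝ (fun q => fderiv ℝ φ q v) p₀) :
    deriv (deriv fun s : ℝ => φ (p₀ + s • v)) 0 = fderiv ℝ (fun q => fderiv ℝ φ q v) p₀ v := by
  have hline : ∀ s : ℝ, HasDerivAt (fun s : ℝ => p₀ + s • v) v s := fun s => by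
    simpa using ((hasDerivAt_id s).smul_const v).const_add p₀
  have hderiv : deriv (fun s : ℝ => φ (p₀ + s • v)) = fun s => fderiv ℝ φ (p₀ + s • v) v :=
    funext fun s => ((hφ _).hasFDerivAt.comp_hasDerivAt s (hline s)).deriv
  rw [hderiv]
  exact (hφ'.hasFDerivAt.comp_hasDerivAt_of_eq 0 (hline 0) (by simp)).deriv

theorem IsLocalMax.fderiv_fderiv_apply_nonpos {φ : E → ℝ} {p₀ : E} (h : IsLocalMax φ p₀)
    (hφ : ContDiff ℝ 2 φ) (v : E) : fderiv ℝ (fun q => fderiv ℝ φ q v) p₀ v ≤ 0 := by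
  have hφ' : ContDiff ℝ 1 fun q => fderiv ℝ φ q v :=
    (hφ.fderiv_right (m := 1) (by norm_num)).clm_apply contDiff_const
  rw [← deriv_deriv_comp_add_smul p₀ v (hφ.differentiable (by norm_num))
    (hφ'.differentiable one_ne_zero p₀)]
  have hline : Continuous fun s : ℝ => p₀ + s • v := by fun_prop
  refine IsLocalMax.deriv_deriv_nonpos ?_ (hφ.continuous.comp hline).continuousAt
  exact IsLocalMax.comp_continuous (g := fun s : ℝ => p₀ + s • v) (b := 0) (by simpa using h)
    hline.continuousAt

end LineRestriction

theorem IsLocalMax.lap2_nonpos {φ : ℝ × ℝ → ℝ} {p : ℝ × ℝ} (h : IsLocalMax φ p)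
    (hφ : ContDiff ℝ 2 φ) : lap2 φ p ≤ 0 :=
  add_nonpos (h.fderiv_fderiv_apply_nonpos hφ _) (h.fderiv_fderiv_apply_nonpos hφ _)

/-- The cosh-Gordon equation Δφ = 4(e^φ + |t|²e^{−φ}) has no ℤ²-periodic C² solutions:
cosh-Gordon metrics do not exist on the torus. -/
theorem no_periodic_coshGordon_solution :
    ¬ ∃ (φ : ℝ × ℝ → ℝ) (t : ℝ × ℝ → ℂ),
      ContDiff ℝ 2 φ ∧
      (∀ (x y : ℝ) (m n : ℤ), φ (x + m, y + n) = φ (x, y)) ∧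
      (∀ p, lap2 φ p = 4 * (Real.exp (φ p) + ‖t p‖ ^ 2 * Real.exp (-φ p))) := by
  rintro ⟨φ, t, hφ, hper, heq⟩
  obtain ⟨p, hp⟩ := exists_forall_le_of_intPeriodic hφ.continuous hper
  have hlap : lap2 φ p ≤ 0 := IsLocalMax.lap2_nonpos (Eventually.of_forall hp) hφ
  have hrhs : 0 < 4 * (Real.exp (φ p) + ‖t p‖ ^ 2 * Real.exp (-φ p)) := by positivity
  linarith [heq p]
end
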